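/- For every real number λ > e·√2 there exists a natural number m such that for all n ≥ m, for every exchangeable probability distribution p on RB(n), and for T₁, T₂ independent random trees each distributed according to p, the expected value E[MAST(T₁,T₂)] ≤ λ·√n. -/

import Mathlib

/-- Rooted binary leaf-labeled trees with labels of type `α`. -/
inductive RTree (α : Type) : Type where
  | leaf : α → RTree α
  | node : RTree α → RTree α → RTree α
  deriving DecidableEq

namespace RTree

variable {α β : Type}

/-- The multiset of leaf labels of a tree. -/
def leafM : RTree α → Multiset α
  | leaf a => {a}
  | node l r => leafM l + leafM r

/-- `T` is a rooted binary leaf-labeled tree on label set `Fin n`: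
every label of `Fin n` occurs exactly once among the leaves. -/
def IsRB {n : ℕ} (T : RTree (Fin n)) : Prop :=
  leafM T = (Finset.univ : Finset (Fin n)).val

/-- Relabel the leaves of a tree along a function. -/
def relabel (f : α → β) : RTree α → RTree β
  | leaf a => leaf (f a)
  | node l r => node (relabel f l) (relabel f r)

/-- Restriction of a tree to the set `A` of labels (`none` means the empty tree). -/
def restrict [DecidableEq α] (A : Finset α) : RTree α → Option (RTree α)
  | leaf a => if a ∈ A then some (leaf a) else none
  | node l r =>
    match restrict A l, restrict A r with
    | some l', some r' => some (node l' r')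
    | some l', none => some l'
    | none, some r' => some r'
    | none, none => none

/-- The size of a maximum agreement subtree of `T₁` and `T₂`: the largest cardinality
of a set `A` of labels with `T₁|_A = T₂|_A` (the empty set always agrees). -/
def mast {n : ℕ} (T₁ T₂ : RTree (Fin n)) : ℕ :=
  ((Finset.univ : Finset (Fin n)).powerset.filter
    (fun A => restrict A T₁ = restrict A T₂)).sup Finset.card

end RTree

/-!
For a nonempty label set `A`, exchangeability makes the `|A|!` relabellings of a restriction
`T|_A` by permutations supported on `A` equally likely; they are pairwise distinct, so
`P(T₁|_A = T₂|_A) ≤ 1/|A|!`. Bounding `MAST` by `k` plus `n` times the number of agreement sets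
of size `> k`, with `k = ⌈c√n⌉` for some `e < c < λ`, gives
`E[MAST] ≤ k + n · ∑_{j > k} C(n,j)/j!`, and `C(n,j)/j! ≤ (e²n/j²)^j ≤ (e/c)^(2j)` makes the
tail vanish as `n → ∞`.
-/

open Finset

theorem Finset.card_nsmul_le_sum_of_fiber_sum_eq {ι κ M : Type*} [AddCommMonoid M] [PartialOrder M]
    [IsOrderedAddMonoid M] [DecidableEq κ] {s : Finset ι} {f : ι → M} (hf : ∀ i ∈ s, 0 ≤ f i)
    (g : ι → κ) {t : Finset κ} {c : M} (hc : ∀ j ∈ t, ∑ i ∈ s with g i = j, f i = c) :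
    #t • c ≤ ∑ i ∈ s, f i :=
  calc #t • c = ∑ j ∈ t, ∑ i ∈ s with g i = j, f i := by rw [sum_congr rfl hc, sum_const]
    _ = ∑ i ∈ s with g i ∈ t, f i := sum_fiberwise_eq_sum_filter s t g f
    _ ≤ ∑ i ∈ s, f i := sum_le_sum_of_subset_of_nonneg (filter_subset _ _) fun i hi _ ↦ hf i hi

namespace RTree

variable {α β γ : Type}

theorem leafM_relabel (f : α → β) (T : RTree α) : leafM (relabel f T) = (leafM T).map f := by
  induction T with
  | leaf a => rfl
  | node l r ihl ihr => simp [leafM, relabel, ihl, ihr]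

theorem relabel_relabel (f : α → β) (g : β → γ) (T : RTree α) :
    relabel g (relabel f T) = relabel (g ∘ f) T := by
  induction T with
  | leaf a => rfl
  | node l r ihl ihr => simp only [relabel, ihl, ihr]

theorem relabel_id (T : RTree α) : relabel id T = T := by
  induction T with
  | leaf a => rfl
  | node l r ihl ihr => simp only [relabel, ihl, ihr]

def relabelPerm (σ : Equiv.Perm α) : Equiv.Perm (RTree α) where
  toFun := relabel σ
  invFun := relabel σ.symm
  left_inv T := by simp [relabel_relabel, relabel_id]
  right_inv T := by simp [relabel_relabel, relabel_id]

theorem eqOn_of_relabel_eq {f g : α → β} {T : RTree α} (h : relabel f T = relabel g T) :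
    ∀ a ∈ leafM T, f a = g a := by
  induction T with
  | leaf a => simpa [leafM, relabel] using h
  | node l r ihl ihr =>
    simp only [relabel, node.injEq] at h
    simpa [leafM, or_imp, forall_and] using ⟨ihl h.1, ihr h.2⟩

section Restrict

variable [DecidableEq α] (A : Finset α)

theorem restrict_relabel {f : α → α} (hf : ∀ a, f a ∈ A ↔ a ∈ A) (T : RTree α) :
    restrict A (relabel f T) = (restrict A T).map (relabel f) := by
  induction T with
  | leaf a => by_cases ha : a ∈ A <;> simp [restrict, relabel, ha, hf a]
  | node l r ihl ihr =>
    simp only [relabel, restrict, ihl, ihr]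
    cases restrict A l <;> cases restrict A r <;> rfl

theorem leafM_restrict (T : RTree α) :
    (restrict A T).elim 0 leafM = (leafM T).filter (· ∈ A) := by
  induction T with
  | leaf a => by_cases ha : a ∈ A <;> simp [restrict, leafM, Multiset.filter_singleton, ha]
  | node l r ihl ihr =>
    rw [leafM, Multiset.filter_add, ← ihl, ← ihr, restrict]
    cases restrict A l <;> cases restrict A r <;> simp [leafM]

end Restrict

theorem restrict_of_isRB {n : ℕ} {T : RTree (Fin n)} (hT : IsRB T) {A : Finset (Fin n)}
    (hA : A.Nonempty) : ∃ u, restrict A T = some u ∧ leafM u = A.val := by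
  have h := leafM_restrict A T
  rw [hT, ← Finset.filter_val, Finset.filter_mem_eq_inter, Finset.univ_inter] at h
  cases hu : restrict A T with
  | none => simp [hu, eq_comm, hA.ne_empty] at h
  | some u => exact ⟨u, rfl, by simpa [hu] using h⟩

theorem isRB_relabel_iff {n : ℕ} (σ : Equiv.Perm (Fin n)) (T : RTree (Fin n)) :
    IsRB (relabel σ T) ↔ IsRB T := by
  have h : (univ : Finset (Fin n)).val.map σ = univ.val :=
    congrArg Finset.val (map_univ_equiv σ)
  rw [IsRB, IsRB, leafM_relabel]
  nth_rw 1 [← h]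
  exact (Multiset.map_injective σ.injective).eq_iff

theorem relabel_ofSubtype_injective [DecidableEq α] {A : Finset α} {u : RTree α}
    (hu : leafM u = A.val) :
    Function.Injective fun τ : Equiv.Perm A ↦ relabel (Equiv.Perm.ofSubtype τ) u := by
  intro τ τ' h
  ext ⟨a, ha⟩
  have := eqOn_of_relabel_eq h a (by rw [hu]; exact ha)
  simpa [Equiv.Perm.ofSubtype_apply_of_mem _ ha] using this

/-- The probability that two independent `p`-random trees of `s` agree on `A`. -/
def agreeProb [DecidableEq α] (s : Finset (RTree α)) (p : RTree α → ℝ)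
    (A : Finset α) : ℝ :=
  ∑ T₁ ∈ s, p T₁ * ∑ T₂ ∈ s with restrict A T₂ = restrict A T₁, p T₂

section RandomTrees

variable {n : ℕ} {RBn : Finset (RTree (Fin n))} {p : RTree (Fin n) → ℝ}

theorem sum_restrict_eq_relabel (hRB : ∀ T, T ∈ RBn ↔ IsRB T)
    (hex : ∀ (σ : Equiv.Perm (Fin n)) (T : RTree (Fin n)), IsRB T → p (relabel σ T) = p T)
    {A : Finset (Fin n)} {σ : Equiv.Perm (Fin n)} (hσ : ∀ a, σ a ∈ A ↔ a ∈ A) (v : RTree (Fin n)) :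
    ∑ T ∈ RBn with restrict A T = some (relabel σ v), p T =
      ∑ T ∈ RBn with restrict A T = some v, p T := by
  symm
  refine sum_equiv (relabelPerm σ) (fun T ↦ ?_) (fun T hT ↦ ?_)
  · have hinj : Function.Injective (relabel σ) := (relabelPerm σ).injective
    simp only [mem_filter, hRB, relabelPerm, Equiv.coe_fn_mk, isRB_relabel_iff,
      restrict_relabel A hσ, ← Option.map_some, (Option.map_injective hinj).eq_iff]
  · exact (hex σ T ((hRB T).1 (mem_filter.1 hT).1)).symm

theorem factorial_mul_sum_restrict_eq_le (hRB : ∀ T, T ∈ RBn ↔ IsRB T) (hp0 : ∀ T, 0 ≤ p T)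
    (hp1 : ∑ T ∈ RBn, p T = 1)
    (hex : ∀ (σ : Equiv.Perm (Fin n)) (T : RTree (Fin n)), IsRB T → p (relabel σ T) = p T)
    {A : Finset (Fin n)} (hA : A.Nonempty) {T₀ : RTree (Fin n)} (hT₀ : IsRB T₀) :
    ((#A).factorial : ℝ) * ∑ T ∈ RBn with restrict A T = restrict A T₀, p T ≤ 1 := by
  obtain ⟨u, hu, hleaf⟩ := restrict_of_isRB hT₀ hA
  set orbit := univ.image fun τ : Equiv.Perm A ↦ some (relabel (Equiv.Perm.ofSubtype τ) u)
  have hcard : #orbit = (#A).factorial := by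
    have hinj : Function.Injective fun τ : Equiv.Perm A ↦
        some (relabel (Equiv.Perm.ofSubtype τ) u) :=
      (Option.some_injective _).comp (relabel_ofSubtype_injective hleaf)
    rw [card_image_of_injective _ hinj, card_univ, Fintype.card_perm, Fintype.card_coe]
  have hfiber : ∀ v ∈ orbit,
      ∑ T ∈ RBn with restrict A T = v, p T = ∑ T ∈ RBn with restrict A T = some u, p T := by
    simp only [orbit, mem_image, mem_univ, true_and, forall_exists_index]
    rintro _ τ rfl
    exact sum_restrict_eq_relabel hRB hex (Equiv.Perm.ofSubtype_apply_mem_iff_mem τ) u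
  have := card_nsmul_le_sum_of_fiber_sum_eq (fun T _ ↦ hp0 T) (restrict A) hfiber
  rwa [hcard, nsmul_eq_mul, hp1, ← hu] at this

theorem agreeProb_le_inv_factorial (hRB : ∀ T, T ∈ RBn ↔ IsRB T) (hp0 : ∀ T, 0 ≤ p T)
    (hp1 : ∑ T ∈ RBn, p T = 1)
    (hex : ∀ (σ : Equiv.Perm (Fin n)) (T : RTree (Fin n)), IsRB T → p (relabel σ T) = p T)
    {A : Finset (Fin n)} (hA : A.Nonempty) :
    agreeProb RBn p A ≤ 1 / (#A).factorial := by
  rw [le_div_iff₀ (by positivity), agreeProb, sum_mul]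
  calc ∑ T₁ ∈ RBn, p T₁ * (∑ T₂ ∈ RBn with restrict A T₂ = restrict A T₁, p T₂) * (#A).factorial
      = ∑ T₁ ∈ RBn, p T₁ *
          (((#A).factorial : ℝ) * ∑ T₂ ∈ RBn with restrict A T₂ = restrict A T₁, p T₂) :=
        sum_congr rfl fun _ _ ↦ by ring
    _ ≤ ∑ T₁ ∈ RBn, p T₁ * 1 := sum_le_sum fun T₁ hT₁ ↦ mul_le_mul_of_nonneg_left
        (factorial_mul_sum_restrict_eq_le hRB hp0 hp1 hex hA ((hRB T₁).1 hT₁)) (hp0 T₁)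
    _ = 1 := by simp [hp1]

theorem mast_le_add_mul_card_agree (k : ℕ) (T₁ T₂ : RTree (Fin n)) :
    mast T₁ T₂ ≤
      k + n * #{A : Finset (Fin n) | k < #A ∧ restrict A T₁ = restrict A T₂} := by
  rcases le_or_gt (mast T₁ T₂) k with h | h
  · exact h.trans (Nat.le_add_right _ _)
  obtain ⟨A, hA, hkA⟩ := Finset.lt_sup_iff.1 h
  have hpos : 0 < #{A : Finset (Fin n) | k < #A ∧ restrict A T₁ = restrict A T₂} :=
    card_pos.2 ⟨A, by simp_all⟩
  have hle : mast T₁ T₂ ≤ n :=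
    Finset.sup_le fun B _ ↦ (card_le_univ B).trans_eq (Fintype.card_fin n)
  nlinarith

theorem expected_mast_le (hp0 : ∀ T, 0 ≤ p T) (hp1 : ∑ T ∈ RBn, p T = 1) (k : ℕ) :
    ∑ T₁ ∈ RBn, ∑ T₂ ∈ RBn, p T₁ * p T₂ * (mast T₁ T₂ : ℝ) ≤
      k + n * ∑ A : Finset (Fin n) with k < #A, agreeProb RBn p A :=
  calc ∑ T₁ ∈ RBn, ∑ T₂ ∈ RBn, p T₁ * p T₂ * (mast T₁ T₂ : ℝ)
      ≤ ∑ T₁ ∈ RBn, ∑ T₂ ∈ RBn, p T₁ * p T₂ * (k + n * ∑ A : Finset (Fin n) with k < #A,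
          if restrict A T₂ = restrict A T₁ then 1 else 0) := by
        gcongr with T₁ _ T₂ _
        · exact mul_nonneg (hp0 T₁) (hp0 T₂)
        · have := mast_le_add_mul_card_agree k T₁ T₂
          rw [card_filter] at this
          simp_rw [sum_filter, ← ite_and, eq_comm (a := restrict _ T₂)]
          exact_mod_cast this
    _ = k + n * ∑ A : Finset (Fin n) with k < #A, agreeProb RBn p A := by
        simp only [mul_add, sum_add_distrib, ← sum_mul, ← mul_sum, hp1, one_mul]
        simp only [mul_sum, agreeProb, sum_filter (s := RBn)]
        rw [sum_comm_cycle]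
        congr 1
        refine sum_congr rfl fun A _ ↦ sum_congr rfl fun T₁ _ ↦ sum_congr rfl fun T₂ _ ↦ ?_
        split_ifs <;> ring

end RandomTrees

end RTree

open Real Filter

theorem choose_div_factorial_le {c : ℝ} (hc : 0 < c) {n k : ℕ} (hk : c * √n ≤ k) :
    (n.choose k : ℝ) / k.factorial ≤ ((exp 1 / c) ^ 2) ^ k := by
  have hsq : c ^ 2 * n ≤ (k : ℝ) ^ 2 := by
    have := sq_sqrt (Nat.cast_nonneg n : (0 : ℝ) ≤ n)
    nlinarith [mul_nonneg hc.le (sqrt_nonneg (n : ℝ))]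
  have hpow : (k : ℝ) ^ k ≤ exp k * k.factorial := by
    rw [← div_le_iff₀ (by positivity)]
    exact pow_div_factorial_le_exp _ (Nat.cast_nonneg k) k
  have key : (c ^ 2) ^ k * (n : ℝ) ^ k ≤ (exp k * k.factorial) ^ 2 :=
    calc (c ^ 2) ^ k * (n : ℝ) ^ k = (c ^ 2 * n) ^ k := (mul_pow _ _ _).symm
      _ ≤ ((k : ℝ) ^ 2) ^ k := pow_le_pow_left₀ (by positivity) hsq k
      _ = ((k : ℝ) ^ k) ^ 2 := by ring
      _ ≤ (exp k * k.factorial) ^ 2 := pow_le_pow_left₀ (by positivity) hpow 2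
  calc (n.choose k : ℝ) / k.factorial ≤ (n : ℝ) ^ k / k.factorial / k.factorial := by
        gcongr; exact Nat.choose_le_pow_div k n
    _ ≤ ((exp 1 / c) ^ 2) ^ k := by
        have hρ : ((exp 1 / c) ^ 2) ^ k = exp k ^ 2 / (c ^ 2) ^ k := by
          rw [← exp_one_pow]; ring
        rw [div_div, div_le_iff₀ (by positivity), hρ, div_mul_eq_mul_div,
          le_div_iff₀ (by positivity)]
        linarith

theorem sum_inv_factorial_card_le {c : ℝ} (hc : exp 1 ≤ c) {n k : ℕ} (hk : c * √n ≤ k) :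
    ∑ A : Finset (Fin n) with k < #A, (1 / (#A).factorial : ℝ) ≤
      (n + 1) * ((exp 1 / c) ^ 2) ^ k := by
  have hc0 : 0 < c := (exp_pos 1).trans_le hc
  have hρ1 : (exp 1 / c) ^ 2 ≤ 1 := pow_le_one₀ (by positivity) ((div_le_one hc0).2 hc)
  calc ∑ A : Finset (Fin n) with k < #A, (1 / (#A).factorial : ℝ)
      = ∑ A ∈ (univ : Finset (Fin n)).powerset,
          (fun j ↦ if k < j then (1 / j.factorial : ℝ) else 0) #A := by
        rw [powerset_univ, sum_filter]
    _ = ∑ j ∈ range (n + 1), n.choose j • if k < j then (1 / j.factorial : ℝ) else 0 := by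
        rw [sum_powerset_apply_card (fun j ↦ if k < j then (1 / j.factorial : ℝ) else 0),
          card_univ, Fintype.card_fin]
    _ ≤ ∑ j ∈ range (n + 1), ((exp 1 / c) ^ 2) ^ k := by
        refine sum_le_sum fun j _ ↦ ?_
        split_ifs with hj
        · rw [nsmul_eq_mul, mul_one_div]
          calc (n.choose j : ℝ) / j.factorial ≤ ((exp 1 / c) ^ 2) ^ j :=
                choose_div_factorial_le hc0 (hk.trans (by exact_mod_cast hj.le))
            _ ≤ ((exp 1 / c) ^ 2) ^ k := pow_le_pow_of_le_one (by positivity) hρ1 hj.le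
        · rw [smul_zero]; positivity
    _ = (n + 1) * ((exp 1 / c) ^ 2) ^ k := by simp

theorem eventually_mul_succ_mul_pow_le_one {ρ : ℝ} (hρ0 : 0 ≤ ρ) (hρ1 : ρ < 1) :
    ∀ᶠ n : ℕ in atTop, ∀ k : ℕ, √n ≤ k → n * (n + 1) * ρ ^ k ≤ 1 := by
  have h := (tendsto_pow_const_mul_const_pow_of_lt_one 4 hρ0 hρ1).const_mul 2
  rw [mul_zero] at h
  obtain ⟨K, hK⟩ := eventually_atTop.1 (h.eventually (ge_mem_nhds one_pos))
  refine eventually_atTop.2 ⟨max K 1 ^ 2, fun n hn k hk ↦ ?_⟩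
  have hKk : max K 1 ≤ k := by
    have : ((max K 1 : ℕ) : ℝ) ≤ √n := by
      rw [le_sqrt (by positivity) (by positivity)]; exact_mod_cast hn
    exact_mod_cast this.trans hk
  have hk1 : (1 : ℝ) ≤ k := by exact_mod_cast (le_max_right K 1).trans hKk
  have hnk : (n : ℝ) ≤ (k : ℝ) ^ 2 := by
    have := sq_sqrt (Nat.cast_nonneg n : (0 : ℝ) ≤ n)
    nlinarith [sqrt_nonneg (n : ℝ)]
  calc (n : ℝ) * (n + 1) * ρ ^ k ≤ 2 * ((k : ℝ) ^ 4 * ρ ^ k) := by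
        have : (n : ℝ) * (n + 1) ≤ 2 * (k : ℝ) ^ 4 := by
          have hsq : (n : ℝ) * n ≤ (k : ℝ) ^ 2 * (k : ℝ) ^ 2 :=
            mul_self_le_mul_self (Nat.cast_nonneg n) hnk
          have hk2 : (k : ℝ) ^ 2 ≤ (k : ℝ) ^ 4 := pow_le_pow_right₀ hk1 (by norm_num)
          nlinarith
        nlinarith [pow_nonneg hρ0 k]
    _ ≤ 1 := hK k ((le_max_left K 1).trans hKk)

open RTree in
/-- For every `λ > e·√2` there is an `m` such that for all `n ≥ m` and every exchangeable
probability distribution `p` on `RB(n)`, the expected size of the maximum agreement subtree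
of two independent `p`-random trees is at most `λ·√n`. -/
theorem expected_mast_exchangeable_upper_bound (lam : ℝ)
    (hlam : Real.exp 1 * Real.sqrt 2 < lam) :
    ∃ m : ℕ, ∀ n : ℕ, m ≤ n →
      ∀ (RBn : Finset (RTree (Fin n))), (∀ T, T ∈ RBn ↔ RTree.IsRB T) →
      ∀ p : RTree (Fin n) → ℝ, (∀ T, 0 ≤ p T) → (∑ T ∈ RBn, p T = 1) →
      (∀ (σ : Equiv.Perm (Fin n)) (T : RTree (Fin n)), RTree.IsRB T →
        p (RTree.relabel (⇑σ) T) = p T) →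
      ∑ T₁ ∈ RBn, ∑ T₂ ∈ RBn, p T₁ * p T₂ * (RTree.mast T₁ T₂ : ℝ) ≤ lam * Real.sqrt n := by
  have helam : exp 1 < lam := lt_of_le_of_lt (le_mul_of_one_le_right (exp_pos 1).le
    one_lt_sqrt_two.le) hlam
  obtain ⟨c, hec, hclam⟩ := exists_between helam
  have hc1 : 1 ≤ c := by linarith [add_one_le_exp 1]
  have hρ : (exp 1 / c) ^ 2 < 1 :=
    pow_lt_one₀ (by positivity) ((div_lt_one (by linarith)).2 hec) two_ne_zero
  have hgap : ∀ᶠ n : ℕ in atTop, 2 ≤ (lam - c) * √n :=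
    ((tendsto_sqrt_atTop.comp tendsto_natCast_atTop_atTop).const_mul_atTop
      (sub_pos.2 hclam)).eventually_ge_atTop 2
  obtain ⟨m, hm⟩ := eventually_atTop.1
    ((eventually_mul_succ_mul_pow_le_one (by positivity) hρ).and hgap)
  refine ⟨m, fun n hn RBn hRB p hp0 hp1 hex ↦ ?_⟩
  obtain ⟨htail, hgap⟩ := hm n hn
  set k := ⌈c * √n⌉₊
  have hk : c * √n ≤ k := Nat.le_ceil _
  have hk' : (k : ℝ) < c * √n + 1 := Nat.ceil_lt_add_one (by positivity)
  have hkn : √n ≤ k := le_trans (le_mul_of_one_le_left (sqrt_nonneg _) hc1) hk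
  calc ∑ T₁ ∈ RBn, ∑ T₂ ∈ RBn, p T₁ * p T₂ * (mast T₁ T₂ : ℝ)
      ≤ k + n * ∑ A : Finset (Fin n) with k < #A, agreeProb RBn p A := expected_mast_le hp0 hp1 k
    _ ≤ k + n * ∑ A : Finset (Fin n) with k < #A, (1 / (#A).factorial : ℝ) := by
        gcongr with A hA
        exact agreeProb_le_inv_factorial hRB hp0 hp1 hex
          (card_pos.1 (Nat.zero_lt_of_lt (mem_filter.1 hA).2))
    _ ≤ k + n * ((n + 1) * ((exp 1 / c) ^ 2) ^ k) := by
        gcongr; exact sum_inv_factorial_card_le hec.le hk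
    _ ≤ lam * √n := by nlinarith [htail k hkn]
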